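/- For the extension A = M_n(k) over C = T_n(k) (upper triangular matrices), the element 1 ⊗_C 1 equals Σᵢ e_{i1} ⊗_C e_{1i}, the image of a Casimir element of (A ⊗_k A)^A; consequently A is an H-separable extension of C. -/

import Mathlib

open TensorProduct LinearMap

noncomputable section

variable {K : Type*} [CommRing K] {A B : Type*} [Ring A] [Ring B] [Algebra K A] [Algebra K B]

/-- Left multiplication by `a` on the first tensorand of `A ⊗[K] A`. -/
def lmulT (a : A) : A ⊗[K] A →ₗ[K] A ⊗[K] A := rTensor A (mulLeft K a)

/-- Right multiplication by `a` on the second tensorand of `A ⊗[K] A`. -/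
def rmulT (a : A) : A ⊗[K] A →ₗ[K] A ⊗[K] A := lTensor A (mulRight K a)

/-- The relations defining `A ⊗_B A` as a quotient of `A ⊗[K] A`; working modulo
`relJ f` amounts to working in the tensor square `A ⊗_B A` of the extension `f`. -/
def relJ (f : B →ₐ[K] A) : Submodule K (A ⊗[K] A) :=
  Submodule.span K {z | ∃ x b y, z = (x * f b) ⊗ₜ[K] y - x ⊗ₜ[K] (f b * y)}

/-- `α` is a `B`-`B`-bimodule endomorphism of `A`. -/
def IsBB (f : B →ₐ[K] A) (α : A →ₗ[K] A) : Prop :=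
  (∀ b x, α (f b * x) = f b * α x) ∧ (∀ b x, α (x * f b) = α x * f b)

/-- `t` represents a `B`-central element of `A ⊗_B A`. -/
def IsCent (f : B →ₐ[K] A) (t : A ⊗[K] A) : Prop :=
  ∀ b, lmulT (K := K) (f b) t - rmulT (f b) t ∈ relJ f

/-- `A ⊗_B A` is isomorphic, as a `B`-`A`-bimodule, to a direct summand of `A^N`
for some positive `N`: there is a split mono `ι` (with splitting `π`), both maps
being `B`-`A`-bimodule maps (everything taken modulo the relations `relJ f`). -/
def LeftD2 (f : B →ₐ[K] A) : Prop :=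
  ∃ N : ℕ, 0 < N ∧ ∃ (ι : A ⊗[K] A →ₗ[K] (Fin N → A)) (π : (Fin N → A) →ₗ[K] A ⊗[K] A),
    (∀ z ∈ relJ f, ι z = 0) ∧
    (∀ b z, ι (lmulT (f b) z) = fun i => f b * ι z i) ∧
    (∀ a z, ι (rmulT a z) = fun i => ι z i * a) ∧
    (∀ b (v : Fin N → A), π (fun i => f b * v i) - lmulT (f b) (π v) ∈ relJ f) ∧
    (∀ a (v : Fin N → A), π (fun i => v i * a) - rmulT a (π v) ∈ relJ f) ∧
    (∀ z, π (ι z) - z ∈ relJ f)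

/-- `A ⊗_B A` is isomorphic, as an `A`-`B`-bimodule, to a direct summand of `A^N`. -/
def RightD2 (f : B →ₐ[K] A) : Prop :=
  ∃ N : ℕ, 0 < N ∧ ∃ (ι : A ⊗[K] A →ₗ[K] (Fin N → A)) (π : (Fin N → A) →ₗ[K] A ⊗[K] A),
    (∀ z ∈ relJ f, ι z = 0) ∧
    (∀ a z, ι (lmulT a z) = fun i => a * ι z i) ∧
    (∀ b z, ι (rmulT (f b) z) = fun i => ι z i * f b) ∧
    (∀ a (v : Fin N → A), π (fun i => a * v i) - lmulT a (π v) ∈ relJ f) ∧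
    (∀ b (v : Fin N → A), π (fun i => v i * f b) - rmulT (f b) (π v) ∈ relJ f) ∧
    (∀ z, π (ι z) - z ∈ relJ f)

/-- `A ⊗_B A` is isomorphic, as an `A`-`A`-bimodule, to a direct summand of `A^N`:
H-separability of the extension `f`. -/
def HSep (f : B →ₐ[K] A) : Prop :=
  ∃ N : ℕ, 0 < N ∧ ∃ (ι : A ⊗[K] A →ₗ[K] (Fin N → A)) (π : (Fin N → A) →ₗ[K] A ⊗[K] A),
    (∀ z ∈ relJ f, ι z = 0) ∧
    (∀ a z, ι (lmulT a z) = fun i => a * ι z i) ∧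
    (∀ a z, ι (rmulT a z) = fun i => ι z i * a) ∧
    (∀ a (v : Fin N → A), π (fun i => a * v i) - lmulT a (π v) ∈ relJ f) ∧
    (∀ a (v : Fin N → A), π (fun i => v i * a) - rmulT a (π v) ∈ relJ f) ∧
    (∀ z, π (ι z) - z ∈ relJ f)


open Matrix

/-- The subalgebra of upper triangular `n × n` matrices. -/
def upperTriangular (k : Type*) [CommRing k] (n : ℕ) :
    Subalgebra k (Matrix (Fin n) (Fin n) k) where
  carrier := {M | M.BlockTriangular (_root_.id : Fin n → Fin n)}
  add_mem' ha hb := ha.add hb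
  mul_mem' ha hb := ha.mul hb
  algebraMap_mem' r := by
    show Matrix.BlockTriangular (Matrix.diagonal fun _ => r) (_root_.id : Fin n → Fin n)
    exact Matrix.blockTriangular_diagonal _

/-!
Multiplication `μ : A ⊗_K A → A` factors through `A ⊗_B A`. Given a Casimir element `t`
(`a t = t a` for all `a : A`) with `t ≡ 1 ⊗ 1` modulo the relations of `A ⊗_B A`, the map
`a ↦ a t` is an `A`-`A`-bimodule section of `μ`, so `A ⊗_B A` is a direct summand of `A`.
For `M_n(k)` over `T_n(k)` take `t = Σᵢ e_{i0} ⊗ e_{0i}`: each `e_{0i}` is upper triangular,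
so `e_{ii} ⊗ 1 = e_{i0} e_{0i} ⊗ 1 ≡ e_{i0} ⊗ e_{0i}`.
-/

@[simp]
lemma lmulT_tmul (a x y : A) : lmulT (K := K) a (x ⊗ₜ[K] y) = (a * x) ⊗ₜ[K] y := rfl

@[simp]
lemma rmulT_tmul (a x y : A) : rmulT (K := K) a (x ⊗ₜ[K] y) = x ⊗ₜ[K] (y * a) := rfl

lemma lmulT_mul (a b : A) (z : A ⊗[K] A) : lmulT (a * b) z = lmulT a (lmulT b z) := by
  simp only [lmulT, mulLeft_mul, rTensor_comp, LinearMap.comp_apply]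

@[simp]
lemma lmulT_zero : lmulT (K := K) (0 : A) = 0 := by
  simp only [lmulT, mulLeft_zero_eq_zero, rTensor_zero]

lemma lmulT_add (a b : A) : lmulT (K := K) (a + b) = lmulT a + lmulT b := by
  simp only [lmulT, ← rTensor_add]
  exact congrArg (rTensor A) ((mul K A).map_add a b)

lemma lmulT_rmulT_comm (a b : A) (z : A ⊗[K] A) :
    lmulT a (rmulT b z) = rmulT b (lmulT a z) := by
  simp only [lmulT, rmulT, ← LinearMap.comp_apply, rTensor_comp_lTensor, lTensor_comp_rTensor]

lemma mul'_lmulT (a : A) (z : A ⊗[K] A) : mul' K A (lmulT a z) = a * mul' K A z := by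
  induction z using TensorProduct.induction_on with
  | zero => simp
  | tmul x y => simp [mul_assoc]
  | add x y hx hy => simp only [map_add, hx, hy, mul_add]

lemma mul'_rmulT (a : A) (z : A ⊗[K] A) : mul' K A (rmulT a z) = mul' K A z * a := by
  induction z using TensorProduct.induction_on with
  | zero => simp
  | tmul x y => simp [mul_assoc]
  | add x y hx hy => simp only [map_add, hx, hy, add_mul]

section relJ

variable (f : B →ₐ[K] A)

lemma mul_tmul_sub_tmul_mul_mem_relJ (x : A) (b : B) (y : A) :
    (x * f b) ⊗ₜ[K] y - x ⊗ₜ[K] (f b * y) ∈ relJ f :=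
  Submodule.subset_span ⟨x, b, y, rfl⟩

lemma lmulT_mem_relJ (a : A) {z : A ⊗[K] A} (hz : z ∈ relJ f) : lmulT a z ∈ relJ f := by
  refine (Submodule.span_le (p := (relJ f).comap (lmulT a))).2 ?_ hz
  rintro _ ⟨x, b, y, rfl⟩
  simpa [mul_assoc] using mul_tmul_sub_tmul_mul_mem_relJ f (a * x) b y

lemma rmulT_mem_relJ (a : A) {z : A ⊗[K] A} (hz : z ∈ relJ f) : rmulT a z ∈ relJ f := by
  refine (Submodule.span_le (p := (relJ f).comap (rmulT a))).2 ?_ hz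
  rintro _ ⟨x, b, y, rfl⟩
  simpa [mul_assoc] using mul_tmul_sub_tmul_mul_mem_relJ f x b (y * a)

lemma relJ_le_ker_mul' : relJ f ≤ ker (mul' K A) :=
  Submodule.span_le.2 <| by
    rintro _ ⟨x, b, y, rfl⟩
    simp [mul_assoc]

variable {f} {t : A ⊗[K] A}

lemma lmulT_mul'_sub_mem_relJ (ht : ∀ a, lmulT a t = rmulT a t)
    (h1 : (1 : A) ⊗ₜ[K] (1 : A) - t ∈ relJ f) (z : A ⊗[K] A) :
    lmulT (mul' K A z) t - z ∈ relJ f := by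
  induction z using TensorProduct.induction_on with
  | zero => simp
  | tmul x y =>
    have h := lmulT_mem_relJ f x (rmulT_mem_relJ f y h1)
    rwa [map_sub, map_sub, rmulT_tmul, lmulT_tmul, mul_one, one_mul, ← ht, ← lmulT_mul,
      ← neg_sub, neg_mem_iff] at h
  | add x y hx hy =>
    simpa only [map_add, lmulT_add, LinearMap.add_apply, add_sub_add_comm] using add_mem hx hy

theorem hSep_of_casimir (ht : ∀ a, lmulT a t = rmulT a t)
    (h1 : (1 : A) ⊗ₜ[K] (1 : A) - t ∈ relJ f) : HSep f := by
  let π₀ : A →ₗ[K] A ⊗[K] A := ((rTensorHom A).comp (mul K A)).flip t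
  refine ⟨1, one_pos, pi fun _ => mul' K A, π₀.comp (proj 0), ?_, ?_, ?_, ?_, ?_, ?_⟩
  · exact fun z hz => funext fun _ => relJ_le_ker_mul' f hz
  · exact fun a z => funext fun _ => mul'_lmulT a z
  · exact fun a z => funext fun _ => mul'_rmulT a z
  · intro a v
    change lmulT (a * v 0) t - lmulT a (lmulT (v 0) t) ∈ relJ f
    rw [lmulT_mul, sub_self]
    exact zero_mem _
  · intro a v
    change lmulT (v 0 * a) t - rmulT a (lmulT (v 0) t) ∈ relJ f
    rw [lmulT_mul, ht, lmulT_rmulT_comm, sub_self]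
    exact zero_mem _
  · exact lmulT_mul'_sub_mem_relJ ht h1

end relJ

section Matrix

variable {R l m n : Type*} [CommRing R] [Fintype l] [Fintype m] [DecidableEq l] [DecidableEq m]
  [DecidableEq n]

lemma mul_single_one (a : Matrix l m R) (i : m) (j : n) :
    a * Matrix.single i j (1 : R) = ∑ r, Matrix.single r j (a r i) := by
  ext r c
  simp [Matrix.sum_apply, mul_apply, Matrix.single, ite_and, eq_comm]

lemma single_one_mul (a : Matrix m l R) (i : n) (j : m) :
    Matrix.single i j (1 : R) * a = ∑ c, Matrix.single i c (a j c) := by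
  ext r c
  simp [Matrix.sum_apply, mul_apply, Matrix.single, ite_and, eq_comm]

-- The ascription selects `Matrix` multiplication; left to unification inside `⊗ₜ` it picks the
-- `CStarMatrix` instance, on which `simp` cannot rewrite.
theorem sum_mul_single_tmul_single_eq (a : Matrix m m R) (j : n) :
    ∑ i, (a * Matrix.single i j (1 : R) : Matrix m n R) ⊗ₜ[R] Matrix.single j i (1 : R) =
      ∑ i, Matrix.single i j (1 : R) ⊗ₜ[R] (Matrix.single j i (1 : R) * a) := by
  simp only [mul_single_one, single_one_mul, sum_tmul, tmul_sum]
  rw [Finset.sum_comm]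
  refine Finset.sum_congr rfl fun r _ => Finset.sum_congr rfl fun i _ => ?_
  rw [← mul_one (a r i), ← smul_eq_mul, ← smul_single, ← smul_single, smul_tmul]

end Matrix

lemma single_mem_upperTriangular {k : Type*} [CommRing k] {n : ℕ} {i j : Fin n} (hij : i ≤ j)
    (c : k) : Matrix.single i j c ∈ upperTriangular k n := by
  intro r s hsr
  refine Matrix.single_apply_of_ne i j c r s ?_
  rintro ⟨rfl, rfl⟩
  exact absurd hij (not_le.2 hsr)

lemma one_tmul_one_sub_sum_mem_relJ (k : Type*) [CommRing k] (n : ℕ) [NeZero n] :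
    (1 : Matrix (Fin n) (Fin n) k) ⊗ₜ[k] (1 : Matrix (Fin n) (Fin n) k) -
        ∑ i : Fin n, Matrix.single i 0 (1 : k) ⊗ₜ[k] Matrix.single 0 i (1 : k)
      ∈ relJ (upperTriangular k n).val := by
  have h1 : (1 : Matrix (Fin n) (Fin n) k) ⊗ₜ[k] (1 : Matrix (Fin n) (Fin n) k) =
      ∑ i : Fin n, Matrix.single i i (1 : k) ⊗ₜ[k] 1 := by
    rw [← sum_tmul, sum_single_one]
  rw [h1, ← Finset.sum_sub_distrib]
  refine Submodule.sum_mem _ fun i _ => ?_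
  simpa using mul_tmul_sub_tmul_mul_mem_relJ (upperTriangular k n).val (Matrix.single i 0 1)
    ⟨Matrix.single 0 i 1, single_mem_upperTriangular (Fin.zero_le i) 1⟩ 1

/-- for `A = M_n(k)` over `C = T_n(k)` (upper triangular matrices),
`1 ⊗_C 1 = Σᵢ e_{i1} ⊗_C e_{1i}`, the image of a Casimir element of `(A ⊗_k A)^A`;
consequently `A` is an H-separable extension of `C`. -/
theorem matrix_upperTriangular_hSeparable (k : Type*) [Field k] (n : ℕ) [NeZero n] :
    letI f := (upperTriangular k n).val
    -- `1 ⊗_C 1` equals the canonical image of the Casimir element `Σᵢ e_{i1} ⊗ e_{1i}`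
    (((1 : Matrix (Fin n) (Fin n) k) ⊗ₜ[k] (1 : Matrix (Fin n) (Fin n) k)) -
        ∑ i : Fin n, (Matrix.single i 0 (1 : k)) ⊗ₜ[k] (Matrix.single 0 i (1 : k))
      ∈ relJ f) ∧
    -- `Σᵢ e_{i1} ⊗ e_{1i}` is a Casimir (A-central) element of `A ⊗_k A`
    (∀ a : Matrix (Fin n) (Fin n) k,
      (∑ i : Fin n, (a * Matrix.single i 0 (1 : k)) ⊗ₜ[k] (Matrix.single 0 i (1 : k))) =
        ∑ i : Fin n, (Matrix.single i 0 (1 : k)) ⊗ₜ[k] ((Matrix.single 0 i (1 : k)) * a)) ∧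
    -- hence the extension is H-separable
    HSep (upperTriangular k n).val := by
  refine ⟨one_tmul_one_sub_sum_mem_relJ k n, fun a => sum_mul_single_tmul_single_eq a 0,
    hSep_of_casimir (fun a => ?_) (one_tmul_one_sub_sum_mem_relJ k n)⟩
  simpa only [map_sum, lmulT_tmul, rmulT_tmul] using
    sum_mul_single_tmul_single_eq a (0 : Fin n)
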